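/- arXiv:1109.1442 — 3 statements merged into one kernel-verified Lean document; each statement's English description precedes it below -/
import Mathlib

section
/- Let k and n be positive integers with n ≥ k and k ≥ e·log n + e (where log is the natural logarithm and e is Euler's number). Then S(k,n) is not an integer; in fact, under these hypotheses S(k,n) < 1. -/
/-- The `k`-th elementary symmetric function of `1, 1/2, …, 1/n`. -/
def S (k n : ℕ) : ℚ :=
  ∑ A ∈ Finset.powersetCard k (Finset.Icc 1 n), ∏ i ∈ A, (1 / (i : ℚ))

lemma S_zero (n : ℕ) : S 0 n = 1 := by
  simp [S]

lemma S_succ_zero (k : ℕ) : S (k + 1) 0 = 0 := by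
  rw [S, Finset.powersetCard_eq_empty.mpr (by simp), Finset.sum_empty]

lemma S_succ (k n : ℕ) :
    S (k + 1) (n + 1) = S (k + 1) n + (1 / ((n : ℚ) + 1)) * S k n := by
  have hnm : (n + 1) ∉ Finset.Icc 1 n := by simp
  have h1 : Finset.Icc 1 (n + 1) = insert (n + 1) (Finset.Icc 1 n) := by
    ext x; simp [Finset.mem_Icc, Finset.mem_insert]; omega
  rw [S, h1, Finset.powersetCard_succ_insert hnm]
  rw [Finset.sum_union, Finset.sum_image]
  · congr 1
    rw [S, Finset.mul_sum]
    apply Finset.sum_congr rfl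
    intro A hA
    have hAn : (n + 1) ∉ A := fun hc => hnm ((Finset.mem_powersetCard.mp hA).1 hc)
    rw [Finset.prod_insert hAn]
    push_cast
    ring
  · intro A hA B hB hAB
    have hAn : (n + 1) ∉ A := fun hc => hnm ((Finset.mem_powersetCard.mp hA).1 hc)
    have hBn : (n + 1) ∉ B := fun hc => hnm ((Finset.mem_powersetCard.mp hB).1 hc)
    exact Finset.insert_erase_invOn.2.injOn (by simpa using hAn) (by simpa using hBn) hAB
  · rw [Finset.disjoint_right]
    intro A hA hA'
    obtain ⟨B, hB, rfl⟩ := Finset.mem_image.mp hA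
    exact (fun hc => hnm ((Finset.mem_powersetCard.mp hA').1 hc))
      (Finset.mem_insert_self _ _)

lemma pow_add_aux (a x : ℚ) (ha : 0 ≤ a) (hx : 0 ≤ x) (m : ℕ) :
    a ^ (m + 1) + (m + 1) * x * a ^ m ≤ (a + x) ^ (m + 1) := by
  induction m with
  | zero => push_cast; nlinarith
  | succ m ih =>
    have hpow : (0:ℚ) ≤ a ^ m := pow_nonneg ha m
    have hnn : (0:ℚ) ≤ ((m:ℚ) + 1) * x ^ 2 * a ^ m :=
      mul_nonneg (mul_nonneg (by positivity) (sq_nonneg x)) hpow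
    have expand : (a + x) * (a ^ (m + 1) + ((m:ℚ) + 1) * x * a ^ m)
        = a ^ (m + 2) + ((m:ℚ) + 2) * x * a ^ (m + 1) + ((m:ℚ) + 1) * x ^ 2 * a ^ m := by
      ring
    calc a ^ (m + 2) + (↑(m + 1) + 1) * x * a ^ (m + 1)
        ≤ (a + x) * (a ^ (m + 1) + (m + 1) * x * a ^ m) := by
          rw [expand]; push_cast; linarith
      _ ≤ (a + x) * (a + x) ^ (m + 1) :=
          mul_le_mul_of_nonneg_left ih (by linarith)
      _ = (a + x) ^ (m + 2) := by ring

lemma S_key : ∀ n k : ℕ, (k.factorial : ℚ) * S k n ≤ (harmonic n) ^ k := by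
  intro n
  induction n with
  | zero =>
    intro k
    cases k with
    | zero => simp [S_zero]
    | succ k => simp [S_succ_zero]
  | succ n ih =>
    intro k
    cases k with
    | zero => simp [S_zero]
    | succ k =>
      have hh : (0:ℚ) ≤ harmonic n := by
        rcases Nat.eq_zero_or_pos n with rfl | hn
        · simp
        · exact le_of_lt (harmonic_pos hn.ne')
      have hx : (0:ℚ) < 1 / ((n:ℚ) + 1) := by positivity
      have h1 := ih (k + 1)
      have h2 := ih k
      have hfac : ((k+1).factorial : ℚ) = (k + 1) * k.factorial := by
        push_cast [Nat.factorial_succ]; ring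
      rw [S_succ, harmonic_succ]
      push_cast
      have key := pow_add_aux (harmonic n) (((n:ℚ)+1)⁻¹) hh (by positivity) k
      have e1 : ((k+1).factorial : ℚ) * (S (k+1) n + 1 / ((n:ℚ) + 1) * S k n)
          = (k+1).factorial * S (k+1) n
            + (↑k + 1) * (((n:ℚ)+1)⁻¹) * ((k.factorial : ℚ) * S k n) := by
        rw [hfac]; push_cast; ring
      rw [e1]
      have h3 : (↑k + 1) * (((n:ℚ)+1)⁻¹) * ((k.factorial : ℚ) * S k n)
          ≤ (↑k + 1) * (((n:ℚ)+1)⁻¹) * (harmonic n) ^ k := by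
        apply mul_le_mul_of_nonneg_left h2 (by positivity)
      calc ((k+1).factorial:ℚ) * S (k+1) n + (↑k + 1) * (((n:ℚ)+1)⁻¹) * ((k.factorial:ℚ) * S k n)
          ≤ (harmonic n) ^ (k+1) + (↑k + 1) * (((n:ℚ)+1)⁻¹) * (harmonic n) ^ k :=
            add_le_add h1 h3
        _ ≤ (harmonic n + ((n:ℚ)+1)⁻¹) ^ (k+1) := by push_cast at key ⊢; linarith

lemma fact_bound : ∀ k : ℕ, 1 ≤ k → ((k:ℝ)) ^ k < (k.factorial : ℝ) * Real.exp 1 ^ k := by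
  intro k
  induction k with
  | zero => intro h; omega
  | succ k ih =>
    intro _
    rcases Nat.eq_zero_or_pos k with rfl | hk
    · simp
    · push_cast
      have ihk := ih hk
      have hkR : (0:ℝ) < (k:ℝ) := by exact_mod_cast hk
      have hb : ((k:ℝ) + 1) ^ k ≤ (k:ℝ) ^ k * Real.exp 1 := by
        have h1 : (1 + 1/(k:ℝ)) ≤ Real.exp (1/(k:ℝ)) := by
          have := Real.add_one_le_exp (1/(k:ℝ)); linarith
        have h2 : (1 + 1/(k:ℝ)) ^ k ≤ Real.exp (1/(k:ℝ)) ^ k :=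
          pow_le_pow_left₀ (by positivity) h1 k
        have h3 : Real.exp (1/(k:ℝ)) ^ k = Real.exp 1 := by
          rw [← Real.exp_nat_mul]
          congr 1
          field_simp
        have h4 : ((k:ℝ) + 1) ^ k = (k:ℝ) ^ k * (1 + 1/(k:ℝ)) ^ k := by
          rw [← mul_pow]; congr 1; field_simp
        rw [h4, ← h3]
        exact mul_le_mul_of_nonneg_left h2 (by positivity)
      have hfacpos : (0:ℝ) < (k.factorial : ℝ) := by exact_mod_cast k.factorial_pos
      have hexp : (0:ℝ) < Real.exp 1 ^ k := by positivity
      calc ((k:ℝ) + 1) ^ (k + 1) = ((k:ℝ) + 1) * ((k:ℝ) + 1) ^ k := by ring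
        _ ≤ ((k:ℝ) + 1) * ((k:ℝ) ^ k * Real.exp 1) :=
            mul_le_mul_of_nonneg_left hb (by positivity)
        _ < ((k:ℝ) + 1) * ((k.factorial : ℝ) * Real.exp 1 ^ k * Real.exp 1) := by
            apply mul_lt_mul_of_pos_left _ (by positivity)
            exact mul_lt_mul_of_pos_right ihk (Real.exp_pos 1)
        _ = ((k+1).factorial : ℝ) * Real.exp 1 ^ (k + 1) := by
            push_cast [Nat.factorial_succ]; ring

theorem stmt_2 (k n : ℕ) (hk : 1 ≤ k) (hkn : k ≤ n)
    (h : Real.exp 1 * Real.log n + Real.exp 1 ≤ (k : ℝ)) :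
    (¬ ∃ z : ℤ, S k n = (z : ℚ)) ∧ S k n < 1 := by
  have hn : 1 ≤ n := le_trans hk hkn
  -- positivity of S
  have hSpos : 0 < S k n := by
    apply Finset.sum_pos
    · intro A hA
      apply Finset.prod_pos
      intro i hi
      have : i ∈ Finset.Icc 1 n := (Finset.mem_powersetCard.mp hA).1 hi
      have : 1 ≤ i := (Finset.mem_Icc.mp this).1
      positivity
    · apply Finset.powersetCard_nonempty.mpr
      simpa [Nat.card_Icc] using hkn
  -- S < 1
  have hSlt : S k n < 1 := by
    have hHpos : (0:ℝ) < (harmonic n : ℝ) := by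
      exact_mod_cast harmonic_pos (by omega)
    have hkey : ((k.factorial : ℚ) : ℝ) * ((S k n : ℚ) : ℝ) ≤ ((harmonic n : ℚ) : ℝ) ^ k := by
      exact_mod_cast S_key n k
    have hfacpos : (0:ℝ) < (k.factorial : ℝ) := by exact_mod_cast k.factorial_pos
    have hS1 : ((S k n : ℚ) : ℝ) ≤ ((harmonic n : ℚ) : ℝ) ^ k / (k.factorial : ℝ) := by
      rw [le_div_iff₀ hfacpos]
      push_cast at hkey ⊢
      linarith
    have hfb := fact_bound k hk
    have hkpos : (0:ℝ) < (k:ℝ) := by exact_mod_cast hk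
    have hH : (harmonic n : ℝ) ≤ 1 + Real.log n := harmonic_le_one_add_log n
    have heH : Real.exp 1 * (harmonic n : ℝ) ≤ (k:ℝ) := by
      have := mul_le_mul_of_nonneg_left hH (le_of_lt (Real.exp_pos 1))
      nlinarith [Real.exp_pos 1]
    -- H^k / k! < (e*H/k)^k ≤ 1
    have h2 : ((harmonic n : ℚ) : ℝ) ^ k / (k.factorial : ℝ)
        < (Real.exp 1 * (harmonic n : ℝ) / (k:ℝ)) ^ k := by
      rw [div_lt_iff₀ hfacpos, div_pow, mul_pow, div_mul_eq_mul_div,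
        lt_div_iff₀ (by positivity)]
      have h5 : ((harmonic n : ℚ) : ℝ) ^ k * (k:ℝ) ^ k
          < ((harmonic n : ℚ) : ℝ) ^ k * ((k.factorial : ℝ) * Real.exp 1 ^ k) :=
        mul_lt_mul_of_pos_left hfb (pow_pos hHpos k)
      nlinarith [h5]
    have h3 : (Real.exp 1 * (harmonic n : ℝ) / (k:ℝ)) ^ k ≤ 1 := by
      apply pow_le_one₀ (by positivity)
      rw [div_le_one hkpos]
      exact heH
    have : ((S k n : ℚ) : ℝ) < 1 := by
      calc ((S k n : ℚ) : ℝ) ≤ _ := hS1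
        _ < _ := h2
        _ ≤ 1 := h3
    exact_mod_cast this
  refine ⟨?_, hSlt⟩
  rintro ⟨z, hz⟩
  rw [hz] at hSpos hSlt
  have h1 : 0 < z := by exact_mod_cast hSpos
  have h2 : z < 1 := by exact_mod_cast hSlt
  omega
end

section
/- Let k and n be positive integers with n ≥ k > 1. If there exists a prime p such that n/(k+4) < p ≤ n/k, p > k+4, and p does not divide 3k+8, then S(k,n) is not an integer. -/
open Finset Nat

theorem Finset.sum_powersetCard_succ_insert_prod {α R : Type*} [DecidableEq α] [CommSemiring R]
    {a : α} {s : Finset α} (ha : a ∉ s) (j : ℕ) (f : α → R) :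
    ∑ t ∈ powersetCard (j + 1) (insert a s), ∏ i ∈ t, f i =
      ∑ t ∈ powersetCard (j + 1) s, ∏ i ∈ t, f i + f a * ∑ t ∈ powersetCard j s, ∏ i ∈ t, f i := by
  rw [powersetCard_succ_insert ha, sum_union, sum_image, mul_sum]
  · refine congrArg _ (sum_congr rfl fun t ht => ?_)
    exact prod_insert fun hat => ha ((mem_powersetCard.1 ht).1 hat)
  · exact insert_erase_invOn.2.injOn.mono fun t ht hat => ha ((mem_powersetCard.1 ht).1 hat)
  · simp only [disjoint_left, mem_powersetCard, mem_image]
    rintro _ ⟨hts, -⟩ ⟨t, -, rfl⟩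
    exact ha (hts (mem_insert_self a t))

def esymmIcc (j m : ℕ) : ℕ := ∑ B ∈ powersetCard j (Icc 1 m), ∏ i ∈ B, i

@[simp] lemma esymmIcc_zero_left (m : ℕ) : esymmIcc 0 m = 1 := by simp [esymmIcc]

@[simp] lemma esymmIcc_succ_zero (j : ℕ) : esymmIcc (j + 1) 0 = 0 := by simp [esymmIcc]

lemma esymmIcc_succ_succ (j m : ℕ) :
    esymmIcc (j + 1) (m + 1) = esymmIcc (j + 1) m + (m + 1) * esymmIcc j m := by
  rw [esymmIcc, ← insert_Icc_right_eq_Icc_add_one (by omega),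
    sum_powersetCard_succ_insert_prod (by simp), esymmIcc, esymmIcc]

lemma two_mul_esymmIcc_one (m : ℕ) : 2 * esymmIcc 1 m = m * (m + 1) := by
  induction m with
  | zero => simp
  | succ m ih => rw [esymmIcc_succ_succ, esymmIcc_zero_left]; linear_combination ih

lemma esymmIcc_two (m : ℕ) : 24 * esymmIcc 2 (m + 1) = m * (m + 1) * (m + 2) * (3 * m + 5) := by
  induction m with
  | zero => simp [esymmIcc_succ_succ]
  | succ m ih =>
    rw [esymmIcc_succ_succ]
    linear_combination ih + 12 * (m + 2) * two_mul_esymmIcc_one (m + 1)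

lemma esymmIcc_three (m : ℕ) :
    48 * esymmIcc 3 (m + 2) = m * (m + 1) * (m + 2) ^ 2 * (m + 3) ^ 2 := by
  induction m with
  | zero => simp [esymmIcc_succ_succ]
  | succ m ih =>
    rw [esymmIcc_succ_succ]
    linear_combination ih + 2 * (m + 3) * esymmIcc_two (m + 1)

lemma not_dvd_esymmIcc {p k j : ℕ} (hp : p.Prime) (hkp : k + 4 < p) (h38 : ¬ p ∣ 3 * k + 8)
    (hj : j ≤ 3) : ¬ p ∣ esymmIcc j (k + j) := by
  have cop : ∀ a, 0 < a → a < p → Coprime p a := fun a ha hap =>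
    coprime_of_lt_prime ha.ne' hap hp
  have of_mul_eq : ∀ c N, c * esymmIcc j (k + j) = N → Coprime p N → ¬ p ∣ esymmIcc j (k + j) :=
    fun c N hN hpN hpE => hp.one_lt.ne' (hpN.eq_one_of_dvd (hN ▸ hpE.mul_left c))
  have cop1 := cop (k + 1) (by omega) (by omega)
  have cop2 := cop (k + 2) (by omega) (by omega)
  have cop3 := cop (k + 3) (by omega) (by omega)
  have cop4 := cop (k + 4) (by omega) (by omega)
  interval_cases j
  · simpa using hp.one_lt.ne'
  · exact of_mul_eq 2 _ (two_mul_esymmIcc_one (k + 1)) (cop1.mul_right cop2)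
  · refine of_mul_eq 24 _ (by rw [esymmIcc_two (k + 1)]) ?_
    exact ((cop1.mul_right cop2).mul_right cop3).mul_right ((hp.coprime_iff_not_dvd).2 h38)
  · refine of_mul_eq 48 _ (esymmIcc_three (k + 1)) ?_
    exact ((cop1.mul_right cop2).mul_right (cop3.pow_right 2)).mul_right (cop4.pow_right 2)

lemma S_eq_esymmIcc_div_factorial {k m : ℕ} (hkm : k ≤ m) :
    S k m = esymmIcc (m - k) m / m ! := by
  have hcard : #(Icc 1 m) = m := by simp
  rw [S, esymmIcc, Nat.cast_sum, sum_div]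
  refine sum_nbij' (Icc 1 m \ ·) (Icc 1 m \ ·) (fun B hB => ?_) (fun B hB => ?_)
    (fun B hB => Finset.sdiff_sdiff_eq_self (mem_powersetCard.1 hB).1)
    (fun B hB => Finset.sdiff_sdiff_eq_self (mem_powersetCard.1 hB).1) (fun B hB => ?_)
  all_goals simp only [mem_powersetCard] at hB ⊢
  · exact ⟨sdiff_subset, by rw [card_sdiff_of_subset hB.1, hcard, hB.2]⟩
  · exact ⟨sdiff_subset, by rw [card_sdiff_of_subset hB.1, hcard, hB.2]; omega⟩
  · have hfac : (∏ i ∈ Icc 1 m \ B, (i : ℚ)) * ∏ i ∈ B, (i : ℚ) = m ! := by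
      rw [prod_sdiff hB.1, ← Nat.cast_prod, ← Ico_add_one_right_eq_Icc, prod_Ico_id_eq_factorial]
    have hne : ∏ i ∈ Icc 1 m \ B, (i : ℚ) ≠ 0 :=
      left_ne_zero_of_mul (hfac ▸ (by positivity : (m ! : ℚ) ≠ 0))
    rw [prod_div_distrib, prod_const_one, Nat.cast_prod, ← hfac, div_mul_cancel_left₀ hne, one_div]

lemma filter_Icc_dvd_eq_map {p : ℕ} (hp : 0 < p) (n : ℕ) :
    {i ∈ Icc 1 n | p ∣ i} = (Icc 1 (n / p)).map ⟨(· * p), mul_left_injective₀ hp.ne'⟩ := by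
  ext i
  simp only [mem_filter, mem_Icc, mem_map, Function.Embedding.coeFn_mk]
  constructor
  · rintro ⟨⟨hi1, hin⟩, j, rfl⟩
    exact ⟨j, ⟨Nat.pos_of_mul_pos_left hi1, (Nat.le_div_iff_mul_le hp).2 (by linarith)⟩,
      mul_comm _ _⟩
  · rintro ⟨j, ⟨hj1, hjn⟩, rfl⟩
    exact ⟨⟨Nat.mul_pos hj1 hp, (Nat.le_div_iff_mul_le hp).1 hjn⟩, dvd_mul_left p j⟩

lemma sum_powersetCard_filter_dvd {p : ℕ} (hp : 0 < p) (k n : ℕ) :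
    ∑ B ∈ powersetCard k {i ∈ Icc 1 n | p ∣ i}, ∏ i ∈ B, 1 / (i : ℚ) = S k (n / p) / p ^ k := by
  rw [filter_Icc_dvd_eq_map hp, powersetCard_map, sum_map, S, sum_div]
  refine sum_congr rfl fun B hB => ?_
  rw [RelEmbedding.coe_toEmbedding, mapEmbedding_apply, prod_map, ← (mem_powersetCard.1 hB).2,
    div_eq_mul_one_div, ← one_div_pow, ← prod_const, ← prod_mul_distrib]
  refine prod_congr rfl fun j _ => ?_
  simp only [Function.Embedding.coeFn_mk, Nat.cast_mul]
  ring

section padicNorm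

variable {p : ℕ} [hp : Fact p.Prime]

lemma padicNorm_S_eq_one {k m : ℕ} (hkm : k ≤ m) (hmp : m < p) (hE : ¬ p ∣ esymmIcc (m - k) m) :
    padicNorm p (S k m) = 1 := by
  rw [S_eq_esymmIcc_div_factorial hkm, padicNorm.div, (padicNorm.nat_eq_one_iff _).2 hE,
    (padicNorm.nat_eq_one_iff _).2 fun h => hmp.not_ge (hp.out.dvd_factorial.1 h), div_one]

lemma padicNorm_one_div_natCast_of_not_dvd {i : ℕ} (h : ¬ p ∣ i) : padicNorm p (1 / i) = 1 := by
  rw [padicNorm.div, padicNorm.one, (padicNorm.nat_eq_one_iff _).2 h, div_one]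

lemma padicNorm_one_div_natCast_le {i : ℕ} (hi : 0 < i) (hip : i < p * p) :
    padicNorm p (1 / i) ≤ p := by
  by_cases hpi : p ∣ i
  · obtain ⟨j, rfl⟩ := hpi
    have hj : ¬ p ∣ j := fun hpj => by
      have := Nat.le_of_dvd (Nat.pos_of_mul_pos_left hi) hpj
      have := Nat.lt_of_mul_lt_mul_left hip
      omega
    rw [Nat.cast_mul, padicNorm.div, padicNorm.one, padicNorm.mul, padicNorm.padicNorm_p_of_prime,
      (padicNorm.nat_eq_one_iff _).2 hj, mul_one, one_div, inv_inv]
  · rw [padicNorm_one_div_natCast_of_not_dvd hpi]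
    exact_mod_cast hp.out.one_le

lemma padicNorm_prod_one_div_le {n : ℕ} {B : Finset ℕ} (hB : B ⊆ Icc 1 n) (hn : n < p * p)
    {i₀ : ℕ} (hi₀ : i₀ ∈ B) (h : ¬ p ∣ i₀) :
    padicNorm p (∏ i ∈ B, 1 / (i : ℚ)) ≤ p ^ (#B - 1) := by
  have hprod : padicNorm p (∏ i ∈ B, 1 / (i : ℚ)) = ∏ i ∈ B, padicNorm p (1 / i) :=
    map_prod (IsAbsoluteValue.abvHom (padicNorm p)) _ _
  rw [hprod, ← mul_prod_erase B _ hi₀, padicNorm_one_div_natCast_of_not_dvd h, one_mul,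
    ← card_erase_of_mem hi₀, ← prod_const]
  refine prod_le_prod (fun _ _ => padicNorm.nonneg _) fun i hi => ?_
  have hi := mem_Icc.1 (hB (mem_of_mem_erase hi))
  exact padicNorm_one_div_natCast_le hi.1 (by omega)

theorem padicNorm_S_eq_pow_of_lt_sq {k n : ℕ} (hk : 0 < k) (hn : n < p * p)
    (h : padicNorm p (S k (n / p)) = 1) : padicNorm p (S k n) = p ^ k := by
  have hsub : powersetCard k {i ∈ Icc 1 n | p ∣ i} ⊆ powersetCard k (Icc 1 n) :=
    powersetCard_mono (filter_subset _ _)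
  have hsplit := sum_sdiff (f := fun B : Finset ℕ => ∏ i ∈ B, 1 / (i : ℚ)) hsub
  rw [← S, sum_powersetCard_filter_dvd hp.out.pos] at hsplit
  have hmain : padicNorm p (S k (n / p) / p ^ k) = p ^ k := by
    rw [padicNorm.div, h, IsAbsoluteValue.abv_pow (padicNorm p), padicNorm.padicNorm_p_of_prime,
      inv_pow, one_div, inv_inv]
  have hrest : padicNorm p (∑ B ∈ powersetCard k (Icc 1 n) \ powersetCard k {i ∈ Icc 1 n | p ∣ i},
      ∏ i ∈ B, 1 / (i : ℚ)) ≤ p ^ (k - 1) := by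
    refine padicNorm.sum_le' (fun B hB => ?_) (by positivity)
    simp only [mem_sdiff, mem_powersetCard] at hB
    obtain ⟨⟨hBn, hBk⟩, hBp⟩ := hB
    obtain ⟨i₀, hi₀B, hi₀p⟩ := not_subset.1 fun hsub => hBp ⟨hsub, hBk⟩
    have : ¬ p ∣ i₀ := fun hd => hi₀p (mem_filter.2 ⟨hBn hi₀B, hd⟩)
    simpa [hBk] using padicNorm_prod_one_div_le hBn hn hi₀B this
  have hlt : (p : ℚ) ^ (k - 1) < p ^ k := pow_lt_pow_right₀ (mod_cast hp.out.one_lt) (by omega)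
  rw [← hsplit, padicNorm.add_eq_max_of_ne (by rw [hmain]; exact (hrest.trans_lt hlt).ne), hmain,
    max_eq_right (hrest.trans hlt.le)]

end padicNorm

theorem stmt_3_general (k n : ℕ) (hk : 1 < k)
    (h : ∃ p : ℕ, p.Prime ∧ (n : ℚ) / (k + 4) < (p : ℚ) ∧ (p : ℚ) ≤ (n : ℚ) / k ∧
      k + 4 < p ∧ ¬ p ∣ 3 * k + 8) :
    ¬ ∃ z : ℤ, S k n = (z : ℚ) := by
  obtain ⟨p, hp, hlow, hup, hkp, h38⟩ := h
  have : Fact p.Prime := ⟨hp⟩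
  have hkp_le : k * p ≤ n := by
    rw [le_div_iff₀ (by positivity)] at hup
    exact_mod_cast (mul_comm _ _).trans_le hup
  have hn_lt : n < (k + 4) * p := by
    rw [div_lt_iff₀ (by positivity)] at hlow
    exact_mod_cast hlow.trans_eq (mul_comm _ _)
  obtain ⟨j, hj, hm⟩ : ∃ j ≤ 3, n / p = k + j := by
    have := (Nat.le_div_iff_mul_le hp.pos).2 hkp_le
    have := (Nat.div_lt_iff_lt_mul hp.pos).2 hn_lt
    exact ⟨n / p - k, by omega, by omega⟩
  have hE : ¬ p ∣ esymmIcc (n / p - k) (n / p) := by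
    simpa [hm] using not_dvd_esymmIcc hp hkp h38 hj
  have hnp : n < p * p := hn_lt.trans_le (Nat.mul_le_mul_right p hkp.le)
  have hS := padicNorm_S_eq_pow_of_lt_sq (by omega) hnp
    (padicNorm_S_eq_one (by omega) (by omega) hE)
  rintro ⟨z, hz⟩
  have hz1 := padicNorm.of_int (p := p) z
  rw [← hz, hS] at hz1
  exact hz1.not_gt (one_lt_pow₀ (mod_cast hp.one_lt) (by omega))

theorem stmt_3 (k n : ℕ) (hk : 1 < k) (hkn : k ≤ n)
    (h : ∃ p : ℕ, p.Prime ∧ (n : ℚ) / (k + 4) < (p : ℚ) ∧ (p : ℚ) ≤ (n : ℚ) / k ∧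
      k + 4 < p ∧ ¬ p ∣ 3 * k + 8) :
    ¬ ∃ z : ℤ, S k n = (z : ℚ) :=
  stmt_3_general k n hk h
end

section
/- For every positive integer k, S(k, k+2) = (k+3)(3k+8) / (24·k!). -/
set_option linter.unusedVariables false

lemma S_rec (k n : ℕ) : S (k+1) (n+1) = S (k+1) n + (1/((n:ℚ)+1)) * S k n := by
  unfold S
  have hmem : (n+1) ∉ Finset.Icc 1 n := by simp
  have h : Finset.Icc 1 (n+1) = insert (n+1) (Finset.Icc 1 n) := by
    ext x; simp [Finset.mem_Icc]; omega
  rw [h, Finset.powersetCard_succ_insert hmem]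
  rw [Finset.sum_union]
  · congr 1
    rw [Finset.sum_image]
    · rw [Finset.mul_sum]
      apply Finset.sum_congr rfl
      intro A hA
      have hA' : (n+1) ∉ A := fun hc => hmem ((Finset.mem_powersetCard.mp hA).1 hc)
      rw [Finset.prod_insert hA']
      push_cast
      ring
    · intro A hA B hB hAB
      have hA' : (n+1) ∉ A := fun hc => hmem ((Finset.mem_powersetCard.mp hA).1 hc)
      have hB' : (n+1) ∉ B := fun hc => hmem ((Finset.mem_powersetCard.mp hB).1 hc)
      have : (insert (n+1) A).erase (n+1) = (insert (n+1) B).erase (n+1) := by rw [hAB]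
      rwa [Finset.erase_insert hA', Finset.erase_insert hB'] at this
  · rw [Finset.disjoint_left]
    intro A hA hA2
    have hA' : (n+1) ∉ A := fun hc => hmem ((Finset.mem_powersetCard.mp hA).1 hc)
    obtain ⟨B, hB, rfl⟩ := Finset.mem_image.mp hA2
    exact hA' (Finset.mem_insert_self _ _)

lemma S_diag (n : ℕ) : S n n = 1 / (Nat.factorial n : ℚ) := by
  induction n with
  | zero => simp [S]
  | succ m ih =>
    rw [S_rec m m, ih]
    have : S (m+1) m = 0 := by
      unfold S
      rw [Finset.powersetCard_eq_empty.mpr (by simp)]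
      simp
    rw [this]
    have h := m.factorial_pos
    push_cast [Nat.factorial_succ]
    field_simp
    try ring

lemma S_one (n : ℕ) : S n (n+1) = ((n:ℚ)+2) / (2 * (Nat.factorial n : ℚ)) := by
  induction n with
  | zero => norm_num [S]
  | succ m ih =>
    rw [S_rec m (m+1), S_diag, ih]
    have h : (Nat.factorial m : ℚ) ≠ 0 := by positivity
    push_cast [Nat.factorial_succ]
    field_simp
    try ring

lemma S_two (n : ℕ) : S n (n+2) = ((n:ℚ)+3) * (3*(n:ℚ)+8) / (24 * (Nat.factorial n : ℚ)) := by
  induction n with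
  | zero => norm_num [S]
  | succ m ih =>
    have : m + 1 + 2 = (m + 2) + 1 := by ring
    rw [this, S_rec m (m+2), ih]
    have h2 : m + 2 = (m+1) + 1 := by ring
    rw [h2, S_one]
    have h : (Nat.factorial m : ℚ) ≠ 0 := by positivity
    push_cast [Nat.factorial_succ]
    field_simp
    try ring

theorem stmt_8 (k : ℕ) (hk : 1 ≤ k) :
    S k (k + 2) = ((k : ℚ) + 3) * (3 * (k : ℚ) + 8) / (24 * (Nat.factorial k : ℚ)) := S_two k
end
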